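/- Let G be a finite group with O_{p'}(G) = 1 such that E(G) is nontrivial and F(G) = Soc(G). Then for every component H of G, p divides |H/Z(H)| and the Sylow p-subgroups of H/Z(H) are non-cyclic. -/

import Mathlib

open Subgroup

/-- `H` is a subnormal subgroup of `G`. -/
def IsSubnormal {G : Type*} [Group G] (H : Subgroup G) : Prop :=
  ∃ (n : ℕ) (σ : Fin (n + 1) → Subgroup G), σ 0 = H ∧ σ (Fin.last n) = ⊤ ∧
    ∀ i : Fin n, σ i.castSucc ≤ σ i.succ ∧ ((σ i.castSucc).subgroupOf (σ i.succ)).Normal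

/-- `H` is quasisimple: `H` is perfect and `H/Z(H)` is simple. -/
def IsQuasisimple {G : Type*} [Group G] (H : Subgroup G) : Prop :=
  ⁅H, H⁆ = H ∧ IsSimpleGroup (↥H ⧸ Subgroup.center ↥H)

/-- A component of `G` is a subnormal quasisimple subgroup. -/
def IsComponent {G : Type*} [Group G] (H : Subgroup G) : Prop :=
  _root_.IsSubnormal H ∧ IsQuasisimple H

/-- The Fitting subgroup `F(G)`: the join of all nilpotent normal subgroups. -/
def fittingSubgroup (G : Type*) [Group G] : Subgroup G :=
  ⨆ N ∈ {N : Subgroup G | N.Normal ∧ Group.IsNilpotent ↥N}, N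

/-- The socle `Soc(G)`: the join of all minimal normal subgroups. -/
def socle (G : Type*) [Group G] : Subgroup G :=
  ⨆ N ∈ {N : Subgroup G | N.Normal ∧ N ≠ ⊥ ∧
    ∀ M : Subgroup G, M.Normal → M ≤ N → M = ⊥ ∨ M = N}, N

/-!
Since `O_{p'}(G) = 1`, every abelian normal subgroup of `G` is a `p`-group. By Wielandt's argument a
component `H` commutes elementwise with every conjugate other than itself, so `Z(H)` lies in the
centre of the normal closure `N` of `H`, an abelian normal subgroup: `Z(H)` is a `p`-group.

It is nontrivial. A nilpotent normal subgroup `L` centralises every minimal normal subgroup `M`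
(otherwise `M = [M, L] = [M, L, L] = ⋯ = 1`), hence so does `F(G)`; as `M ≤ Soc(G) = F(G)`, `M`
is abelian. Taking `M ≤ N`, the perfect group `H` cannot lie in `M`, so again by Wielandt it
centralises `M`, and so does every conjugate; thus `M ≤ Z(N)`. But `N` is a central product of the
conjugates of `H`, so `Z(H) = 1` would force `Z(N) = 1`.

Finally, if `p ∤ |H/Z(H)|` or `H/Z(H)` has a cyclic Sylow `p`-subgroup, then `H` has an abelian
Sylow `p`-subgroup `P` (`Z(H)` itself, resp. any `P`, as `P/(P ∩ Z(H))` is cyclic). The transfer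
`H → P` is trivial since `H` is perfect, and it sends a central `z` to `z ^ |H : P|`, an exponent
prime to `p`; so the `p`-group `Z(H)` would be trivial.
-/

open scoped Pointwise

namespace Subgroup

variable {G : Type*} [Group G]

theorem le_center_or_eq_top_of_isSimpleGroup_quotient_center
    (hperf : _root_.commutator G = ⊤) (hsimple : IsSimpleGroup (G ⧸ center G))
    (K : Subgroup G) [K.Normal] : K ≤ center G ∨ K = ⊤ := by
  have hKmap : (K.map (QuotientGroup.mk' (center G))).Normal :=
    ‹K.Normal›.map _ (QuotientGroup.mk'_surjective _)
  refine hKmap.eq_bot_or_eq_top.imp (fun h => ?_) fun h => ?_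
  · rwa [map_eq_bot_iff, QuotientGroup.ker_mk'] at h
  · have hsup : K ⊔ center G = ⊤ := by
      simpa [comap_map_eq] using congrArg (comap (QuotientGroup.mk' (center G))) h
    -- modulo `K`, every element is central, so `G ⧸ K` is abelian
    have hstep : ⊤ ≤ upperCentralSeriesStep K := by
      rw [← hsup]
      refine sup_le (fun k hk y => ?_) fun z hz y => ?_
      · exact commutator_le_left K ⊤ (commutator_mem_commutator hk (mem_top y))
      · rw [commutatorElement_eq_one_iff_mul_comm.mpr (mem_center_iff.mp hz y).symm]
        exact K.one_mem
    rw [eq_top_iff, ← hperf, _root_.commutator_def, commutator_le]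
    exact fun x _ y _ => hstep (mem_top x) y

theorem eq_bot_of_le_commutator_of_isNilpotent {M N : Subgroup G} [N.Normal]
    (hN : Group.IsNilpotent N) (h : M ≤ ⁅M, N⁆) : M = ⊥ := by
  obtain ⟨n, hn⟩ := (isNilpotent_iff_lowerCentralSeries N).mp hN
  have hle : ∀ k, M ≤ N.lowerCentralSeries k := by
    intro k
    induction k with
    | zero => exact h.trans (commutator_le_right M N)
    | succ k ih => exact h.trans (commutator_mono ih le_rfl)
  exact eq_bot_iff.mpr (hn ▸ hle n)

def IsMinimalNormal (M : Subgroup G) : Prop :=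
  M.Normal ∧ M ≠ ⊥ ∧ ∀ M' : Subgroup G, M'.Normal → M' ≤ M → M' = ⊥ ∨ M' = M

theorem exists_isMinimalNormal_le [Finite G] {N : Subgroup G} [N.Normal] (hN : N ≠ ⊥) :
    ∃ M : Subgroup G, M.IsMinimalNormal ∧ M ≤ N := by
  obtain ⟨M, ⟨hMn, hMne, hMN⟩, hmin⟩ := (wellFounded_lt (α := Subgroup G)).has_min
    {M | M.Normal ∧ M ≠ ⊥ ∧ M ≤ N} ⟨N, ‹_›, hN, le_rfl⟩
  refine ⟨M, ⟨hMn, hMne, fun M' hM' hle => ?_⟩, hMN⟩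
  by_contra! h
  exact hmin M' ⟨hM', h.1, hle.trans hMN⟩ (lt_of_le_of_ne hle h.2)

theorem IsMinimalNormal.le_socle {M : Subgroup G} (hM : M.IsMinimalNormal) : M ≤ socle G :=
  le_biSup id (s := {N : Subgroup G | N.IsMinimalNormal}) hM

theorem IsMinimalNormal.commutator_eq_bot_of_isNilpotent {M N : Subgroup G}
    (hM : M.IsMinimalNormal) [N.Normal] (hN : Group.IsNilpotent N) : ⁅M, N⁆ = ⊥ := by
  have := hM.1
  exact (hM.2.2 _ inferInstance (commutator_le_left M N)).resolve_right fun h =>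
    hM.2.1 (eq_bot_of_le_commutator_of_isNilpotent hN h.ge)

theorem IsMinimalNormal.le_centralizer_self (hFS : fittingSubgroup G = socle G)
    {M : Subgroup G} (hM : M.IsMinimalNormal) : M ≤ centralizer M := by
  have hF : fittingSubgroup G ≤ centralizer M := iSup₂_le fun N ⟨hNn, hNnil⟩ => by
    rw [← commutator_eq_bot_iff_le_centralizer, commutator_comm]
    exact hM.commutator_eq_bot_of_isNilpotent (N := N) hNnil
  exact hM.le_socle.trans (hFS ▸ hF)

theorem isPGroup_of_normal_of_le_centralizer [Finite G] {p : ℕ} (hp : p.Prime)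
    (hOp' : ∀ N : Subgroup G, N.Normal → ¬ p ∣ Nat.card N → N = ⊥)
    {A : Subgroup G} [A.Normal] (hA : A ≤ centralizer A) : IsPGroup p A := by
  have : IsMulCommutative A := le_centralizer_iff_isMulCommutative.mp hA
  refine IsPGroup.of_card
    (Nat.eq_prime_pow_of_unique_prime_dvd Nat.card_pos.ne' fun {q} hq hqA => ?_)
  have := Fact.mk hq
  -- a Sylow `q`-subgroup of the abelian group `A` is characteristic in `A`, hence normal in `G`
  let Q : Sylow q A := default
  have : (Q : Subgroup A).Characteristic := Q.characteristic_of_normal inferInstance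
  by_contra hqp
  refine Q.ne_bot_of_dvd_card hqA
    ((map_eq_bot_iff_of_injective _ A.subtype_injective).mp (hOp' _ inferInstance ?_))
  rw [card_map_of_injective A.subtype_injective, Q.card_eq_multiplicity]
  exact fun h => hqp ((Nat.prime_dvd_prime_iff_eq hp hq).mp (hp.dvd_of_dvd_pow h)).symm

theorem smul_commutator (e : MulAut G) (A B : Subgroup G) :
    e • ⁅A, B⁆ = ⁅e • A, e • B⁆ := by
  simp only [pointwise_smul_def]
  exact map_commutator A B _

theorem smul_centralizer (e : MulAut G) (K : Subgroup G) :
    e • centralizer (K : Set G) = centralizer ((e • K : Subgroup G) : Set G) := by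
  ext x
  simp only [mem_pointwise_smul_iff_inv_smul_mem, mem_centralizer_iff, SetLike.mem_coe]
  constructor
  · intro h y hy
    simpa [MulAut.smul_def] using congrArg e (h _ hy)
  · intro h y hy
    simpa [MulAut.smul_def] using
      congrArg e.symm (h (e y) (by simpa [MulAut.smul_def] using hy))

theorem normalClosure_eq_iSup_conj_smul (H : Subgroup G) :
    normalClosure (H : Set G) = ⨆ g : G, MulAut.conj g • H := by
  refine le_antisymm ((closure_le _).mpr fun x hx => ?_) (iSup_le fun g => ?_)
  · obtain ⟨a, ha, c, rfl⟩ := Group.mem_conjugatesOfSet_iff.mp hx |>.imp fun a h =>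
      h.imp_right isConj_iff.mp
    exact mem_iSup_of_mem c (smul_mem_pointwise_smul a (MulAut.conj c) H ha)
  · calc MulAut.conj g • H ≤ MulAut.conj g • normalClosure (H : Set G) :=
          pointwise_smul_le_pointwise_smul_iff.mpr le_normalClosure
      _ = normalClosure (H : Set G) := Normal.conj_smul_eq_self g _

theorem map_subtype_center (H : Subgroup G) :
    (center H).map H.subtype = H ⊓ centralizer (H : Set G) := by
  ext x
  simp only [mem_map, mem_center_iff, mem_inf, mem_centralizer_iff, coe_subtype]
  constructor
  · rintro ⟨y, hy, rfl⟩
    exact ⟨y.2, fun z hz => congrArg Subtype.val (hy ⟨z, hz⟩)⟩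
  · rintro ⟨hx, h⟩
    exact ⟨⟨x, hx⟩, fun z => Subtype.ext (h z z.2), rfl⟩

theorem sSup_inf_centralizer_eq_bot {S : Set (Subgroup G)} (hS : S.Finite)
    (hcomm : S.Pairwise fun A B => A ≤ centralizer (B : Set G))
    (hcenter : ∀ A ∈ S, A ⊓ centralizer (A : Set G) = ⊥) :
    sSup S ⊓ centralizer ((sSup S : Subgroup G) : Set G) = ⊥ := by
  induction S, hS using Set.Finite.induction_on with
  | empty => simp
  | @insert A S hAS hS ih =>
    rw [sSup_insert, eq_bot_iff]
    rintro z ⟨hz, hzc⟩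
    have hSA : sSup S ≤ centralizer (A : Set G) := sSup_le fun B hB =>
      hcomm (Set.mem_insert_of_mem _ hB) (Set.mem_insert _ _) (ne_of_mem_of_not_mem hB hAS)
    have hz' : z ∈ (A : Set G) * sSup S := by
      rwa [← coe_mul_of_right_le_normalizer_left _ _ (hSA.trans (centralizer_le_normalizer _))]
    obtain ⟨a, ha, s, hs, rfl⟩ := Set.mem_mul.mp hz'
    -- both `a * s` and `s` centralize `A`, hence `a` lies in the trivial centre of `A`
    have haZ : a ∈ A ⊓ centralizer (A : Set G) := by
      refine ⟨ha, mem_centralizer_iff.mpr fun y hy => mul_right_cancel (b := s) ?_⟩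
      have hzy := mem_centralizer_iff.mp hzc y (mem_sup_left hy)
      have hsy := mem_centralizer_iff.mp (hSA hs) y hy
      rw [mul_assoc, hzy, mul_assoc, ← hsy, ← mul_assoc]
    rw [hcenter A (Set.mem_insert _ _), mem_bot] at haZ
    subst haZ
    rw [one_mul] at hzc ⊢
    rw [← ih (hcomm.mono (Set.subset_insert _ _))
      fun B hB => hcenter B (Set.mem_insert_of_mem _ hB)]
    exact ⟨hs, centralizer_le (SetLike.coe_subset_coe.mpr le_sup_right) hzc⟩

end Subgroup

section Wielandt

variable {G : Type*} [Group G]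

theorem IsComponent.isSubnormal {H : Subgroup G} (hH : IsComponent H) : H.IsSubnormal := by
  obtain ⟨⟨n, σ, h0, hlast, hstep⟩, -⟩ := hH
  rw [← h0]
  induction (0 : Fin (n + 1)) using Fin.reverseInduction with
  | last => rw [hlast]; exact .top
  | cast i ih => exact .step _ _ (hstep i).1 ih (hstep i).2

theorem IsQuasisimple.ne_bot {H : Subgroup G} (hH : IsQuasisimple H) : H ≠ ⊥ := by
  rintro rfl
  obtain ⟨x, y, hxy⟩ := hH.2.exists_pair_ne
  exact hxy (Subsingleton.elim x y)

theorem IsQuasisimple.commutator_eq_top {H : Subgroup G} (hH : IsQuasisimple H) :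
    _root_.commutator H = ⊤ := by
  rw [← map_subtype_inj, map_subtype_commutator, hH.1, ← MonoidHom.range_eq_map, range_subtype]

theorem IsQuasisimple.le_or_commutator_inf_eq_bot {H N : Subgroup G} (hH : IsQuasisimple H)
    (hN : H ≤ normalizer (N : Set G)) : H ≤ N ∨ ⁅N ⊓ H, H⁆ = ⊥ := by
  have : (N.subgroupOf H).Normal := by
    rw [← inf_subgroupOf_right, normal_subgroupOf_iff_le_normalizer inf_le_right]
    exact le_trans (le_inf hN le_normalizer) inf_normalizer_le_normalizer_inf
  refine (Subgroup.le_center_or_eq_top_of_isSimpleGroup_quotient_center hH.commutator_eq_top hH.2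
    (N.subgroupOf H)).symm.imp subgroupOf_eq_top.mp fun h => ?_
  rw [commutator_eq_bot_iff_le_centralizer]
  intro x hx
  rw [mem_centralizer_iff]
  intro y hy
  have := mem_center_iff.mp (h (show (⟨x, hx.2⟩ : H) ∈ N.subgroupOf H from hx.1)) ⟨y, hy⟩
  exact congrArg Subtype.val this

theorem IsQuasisimple.le_or_commutator_eq_bot_of_chain {H : Subgroup G} (hH : IsQuasisimple H)
    {f : ℕ → Subgroup G} (hf0 : f 0 = H) (hmono : Monotone f)
    (hnorm : ∀ i, f (i + 1) ≤ normalizer (f i : Set G)) (n : ℕ) {N : Subgroup G}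
    (hN : f n ≤ normalizer (N : Set G)) : H ≤ N ∨ ⁅N ⊓ f n, H⁆ = ⊥ := by
  induction n generalizing N with
  | zero => subst hf0; exact hH.le_or_commutator_inf_eq_bot hN
  | succ n ih =>
    set N' := N ⊓ f (n + 1)
    have hHn : H ≤ f n := hf0 ▸ hmono n.zero_le
    have hN' : f n ≤ normalizer (N' : Set G) :=
      le_trans (le_inf ((hmono n.le_succ).trans hN) ((hmono n.le_succ).trans le_normalizer))
        inf_normalizer_le_normalizer_inf
    refine (ih hN').imp (fun h => h.trans inf_le_left) fun h => ?_
    have hle : ⁅N', H⁆ ≤ N' ⊓ f n :=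
      le_inf (le_normalizer_iff_commutator_le_left.mp (hHn.trans hN'))
        ((commutator_mono le_rfl hHn).trans
          (le_normalizer_iff_commutator_le_right.mp (inf_le_right.trans (hnorm n))))
    -- three subgroups lemma, using that `H` is perfect
    have h1 : ⁅⁅N', H⁆, H⁆ = ⊥ := eq_bot_iff.mpr ((commutator_mono hle le_rfl).trans h.le)
    have h2 : ⁅⁅H, N'⁆, H⁆ = ⊥ := by rwa [commutator_comm H N']
    have h3 := commutator_commutator_eq_bot_of_rotate h2 h1
    rwa [hH.1, commutator_comm] at h3

theorem IsQuasisimple.le_or_commutator_eq_bot {H L : Subgroup G} (hH : IsQuasisimple H)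
    (hHs : H.IsSubnormal) (hL : L.IsSubnormal) : H ≤ L ∨ ⁅L, H⁆ = ⊥ := by
  obtain ⟨n, f, hmono, hnorm, hf0, hfn⟩ := hHs.exists_chain
  induction hL with
  | top => exact .inl le_top
  | step L K hLK _ hLnorm ih =>
    refine ih.elim (fun hHK => ?_) fun h =>
      .inr (eq_bot_iff.mpr ((commutator_mono hLK le_rfl).trans h.le))
    have hchain := hH.le_or_commutator_eq_bot_of_chain (f := fun i => f i ⊓ K)
      (by simp [hf0, hHK]) (fun i j hij => inf_le_inf_right K (hmono hij))
      (fun i => le_trans (inf_le_inf ((normal_subgroupOf_iff_le_normalizer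
        (hmono i.le_succ)).mp (hnorm i)) le_normalizer) inf_normalizer_le_normalizer_inf)
      n (N := L) (by simpa [hfn] using (normal_subgroupOf_iff_le_normalizer hLK).mp hLnorm)
    simpa [hfn, inf_eq_left.mpr hLK] using hchain

end Wielandt

namespace IsComponent

open Subgroup

variable {G : Type*} [Group G] [Finite G] {H : Subgroup G}

theorem commutator_conj_smul_eq_bot (hH : IsComponent H) {g : G} (hg : MulAut.conj g • H ≠ H) :
    ⁅MulAut.conj g • H, H⁆ = ⊥ :=
  (hH.2.le_or_commutator_eq_bot hH.isSubnormal (hH.isSubnormal.smul _)).resolve_left fun hle =>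
    hg (eq_of_le_of_card_ge hle (Nat.card_congr (equivSMul _ H).toEquiv).ge).symm

theorem commutator_conj_smul_eq_bot_of_ne (hH : IsComponent H) {a b : G}
    (hab : MulAut.conj a • H ≠ MulAut.conj b • H) :
    ⁅MulAut.conj b • H, MulAut.conj a • H⁆ = ⊥ := by
  have hb : MulAut.conj b • H = MulAut.conj a • MulAut.conj (a⁻¹ * b) • H := by
    rw [smul_smul, ← map_mul, mul_inv_cancel_left]
  rw [hb, ← smul_commutator, hH.commutator_conj_smul_eq_bot fun h => hab (by rw [hb, h]),
    smul_bot]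

theorem inf_centralizer_le_centralizer_normalClosure (hH : IsComponent H) :
    H ⊓ centralizer (H : Set G) ≤ centralizer (normalClosure (H : Set G) : Set G) := by
  rw [le_centralizer_iff, normalClosure_eq_iSup_conj_smul, iSup_le_iff]
  intro g
  by_cases hg : MulAut.conj g • H = H
  · rw [hg, ← le_centralizer_iff]
    exact inf_le_right
  · exact (commutator_eq_bot_iff_le_centralizer.mp (hH.commutator_conj_smul_eq_bot hg)).trans
      (centralizer_le inf_le_left)

theorem isPGroup_center {p : ℕ} (hp : p.Prime)
    (hOp' : ∀ N : Subgroup G, N.Normal → ¬ p ∣ Nat.card N → N = ⊥) (hH : IsComponent H) :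
    IsPGroup p (center H) := by
  set N := normalClosure (H : Set G)
  have hZN : IsPGroup p ↥(N ⊓ centralizer (N : Set G)) :=
    isPGroup_of_normal_of_le_centralizer hp hOp' (inf_le_right.trans (centralizer_le inf_le_left))
  have hZH : IsPGroup p ↥(H ⊓ centralizer (H : Set G)) :=
    hZN.to_le (le_inf (inf_le_left.trans le_normalClosure)
      hH.inf_centralizer_le_centralizer_normalClosure)
  rw [← map_subtype_center] at hZH
  exact hZH.of_equiv (equivMapOfInjective _ _ H.subtype_injective).symm

theorem center_ne_bot (hFS : fittingSubgroup G = socle G) (hH : IsComponent H) :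
    center H ≠ ⊥ := by
  rw [Ne, ← map_eq_bot_iff_of_injective _ H.subtype_injective, map_subtype_center]
  intro hZ
  set N := normalClosure (H : Set G) with hN
  obtain ⟨M, hM, hMN⟩ := exists_isMinimalNormal_le
    (N := N) (ne_bot_of_le_ne_bot hH.2.ne_bot le_normalClosure)
  have := hM.1
  -- `M` is abelian, so the perfect group `H` cannot lie in it
  have hHM : H ≤ centralizer (M : Set G) := by
    refine commutator_eq_bot_iff_le_centralizer.mp <| commutator_comm M H ▸
      (hH.2.le_or_commutator_eq_bot hH.isSubnormal hM.1.isSubnormal).resolve_left fun hle => ?_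
    refine hH.2.ne_bot (eq_bot_iff.mpr ?_)
    rw [← hH.2.1, commutator_eq_bot_iff_le_centralizer.mpr
      (hle.trans ((hM.le_centralizer_self hFS).trans (centralizer_le hle)))]
  have hMZ : M ≤ N ⊓ centralizer (N : Set G) :=
    le_inf hMN (le_centralizer_iff.mpr (normalClosure_le_normal hHM))
  refine hM.2.1 (eq_bot_iff.mpr (hMZ.trans_eq ?_))
  -- `N` is the central product of the conjugates of `H`, all of which have trivial centre
  rw [hN, normalClosure_eq_iSup_conj_smul, ← sSup_range]
  refine sSup_inf_centralizer_eq_bot (Set.finite_range _) ?_ ?_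
  · rintro _ ⟨a, rfl⟩ _ ⟨b, rfl⟩ hab
    exact commutator_eq_bot_iff_le_centralizer.mp (hH.commutator_conj_smul_eq_bot_of_ne hab.symm)
  · rintro _ ⟨g, rfl⟩
    rw [← smul_centralizer, ← smul_inf, hZ, smul_bot]

end IsComponent

section Transfer

variable {K : Type*} [Group K] {p : ℕ}

open scoped IsMulCommutative in
theorem pow_index_eq_one_of_mem_center (hperf : commutator K = ⊤) (P : Subgroup K)
    [IsMulCommutative P] [P.FiniteIndex] {z : K} (hz : z ∈ center K) : z ^ P.index = 1 := by
  have htransfer := MonoidHom.transfer_eq_pow (MonoidHom.id P) z fun k g₀ _ => by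
    rw [mul_assoc, ← mem_center_iff.mp (pow_mem hz k) g₀, inv_mul_cancel_left]
  -- the transfer into the abelian group `P` is trivial on the perfect group `K`
  rw [MonoidHom.mem_ker.mp (Abelianization.commutator_subset_ker _ (hperf ▸ mem_top z))]
    at htransfer
  exact congrArg Subtype.val htransfer.symm

variable [Finite K]

theorem IsPGroup.center_eq_bot_of_commutator_eq_top [Fact p.Prime] (hZ : IsPGroup p (center K))
    (hperf : commutator K = ⊤) (P : Sylow p K) [IsMulCommutative P] : center K = ⊥ := by
  refine eq_bot_iff.mpr fun z hz => ?_
  obtain ⟨k, hk⟩ := IsPGroup.iff_orderOf.mp hZ ⟨z, hz⟩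
  have hord : orderOf z = p ^ k := by rwa [Subgroup.orderOf_mk] at hk
  have := (Nat.Coprime.pow_left k ((Nat.Prime.coprime_iff_not_dvd Fact.out).mpr P.not_dvd_index))
  exact mem_bot.mpr (orderOf_eq_one_iff.mp (Nat.eq_one_of_dvd_coprimes this (hord ▸ dvd_rfl)
    (orderOf_dvd_of_pow_eq_one (pow_index_eq_one_of_mem_center hperf P hz))))

theorem Sylow.isMulCommutative_of_isCyclic_quotient_center [Fact p.Prime]
    (Q : Sylow p (K ⧸ center K)) [IsCyclic Q] (P : Sylow p K) : IsMulCommutative P := by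
  set π := QuotientGroup.mk' (center K)
  let P' := P.mapSurjective (QuotientGroup.mk'_surjective (center K))
  have : IsCyclic (P.map π) :=
    isCyclic_of_surjective (Q.equiv P').toMonoidHom (Q.equiv P').surjective
  refine (π.subgroupMap P).isMulCommutative_of_isCyclic_of_ker_le_center fun x hx => ?_
  have hxZ : (x : K) ∈ center K := by
    simpa [π, MonoidHom.mem_ker, Subtype.ext_iff] using hx
  exact mem_center_iff.mpr fun y => Subtype.ext (mem_center_iff.mp hxZ y)

end Transfer

theorem stmt8_general {p : ℕ} (hp : p.Prime) {G : Type*} [Group G] [Finite G]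
    (hOp' : ∀ N : Subgroup G, N.Normal → ¬ p ∣ Nat.card N → N = ⊥)
    (hFS : fittingSubgroup G = socle G) :
    ∀ H : Subgroup G, IsComponent H →
      p ∣ Nat.card (↥H ⧸ Subgroup.center ↥H) ∧
      ∀ Q : Sylow p (↥H ⧸ Subgroup.center ↥H), ¬ IsCyclic ↥(Q : Subgroup (↥H ⧸ Subgroup.center ↥H)) := by
  intro H hH
  have := Fact.mk hp
  have hZ := hH.isPGroup_center hp hOp'
  have hperf := hH.2.commutator_eq_top
  refine ⟨?_, fun Q hQ => ?_⟩
  · -- otherwise the centre itself is an abelian Sylow `p`-subgroup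
    by_contra hpZ
    let Z := hZ.toSylow (by rwa [index_eq_card])
    have : IsMulCommutative Z := inferInstanceAs (IsMulCommutative (center H))
    exact hH.center_ne_bot hFS (hZ.center_eq_bot_of_commutator_eq_top hperf Z)
  · have := Q.isMulCommutative_of_isCyclic_quotient_center default
    exact hH.center_ne_bot hFS (hZ.center_eq_bot_of_commutator_eq_top hperf default)

theorem stmt8 {p : ℕ} (hp : p.Prime) {G : Type*} [Group G] [Finite G]
    (hOp' : ∀ N : Subgroup G, N.Normal → ¬ p ∣ Nat.card N → N = ⊥)
    (hE : ∃ H : Subgroup G, IsComponent H)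
    (hFS : fittingSubgroup G = socle G) :
    ∀ H : Subgroup G, IsComponent H →
      p ∣ Nat.card (↥H ⧸ Subgroup.center ↥H) ∧
      ∀ Q : Sylow p (↥H ⧸ Subgroup.center ↥H), ¬ IsCyclic ↥(Q : Subgroup (↥H ⧸ Subgroup.center ↥H)) :=
  stmt8_general hp hOp' hFS
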